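/- For every real s > 0 and δ > 1/2, lim_{n→∞} (n+1) · Σ_{k ≥ ⌈((n+1)s)^{1/(2δ-1)}⌉} k^{-2δ} = 1/((2δ-1)·s). -/

import Mathlib

/-!
Writing `p = 2δ` and `N = ⌈x⌉₊`, the integral test squeezes the tail `∑_{k ≥ N} k^{-p}` between
`∫_N^∞ t^{-p} dt = N^{1-p}/(p-1)` and `N^{-p}` plus that integral. Since `x ≤ N ≤ x + 1`, this gives
`x^{p-1} ∑_{k ≥ ⌈x⌉₊} k^{-p} → 1/(p-1)` as `x → ∞`, and the theorem is the case
`x = ((n+1)s)^{1/(p-1)}`, for which `x^{p-1} = (n+1)s`.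
-/

open Filter Real Set MeasureTheory Topology

theorem integral_Ioi_rpow_neg {p c : ℝ} (hp : 1 < p) (hc : 0 < c) :
    ∫ t in Ioi c, t ^ (-p) = c ^ (1 - p) / (p - 1) := by
  rw [integral_Ioi_rpow_of_lt (by linarith) hc, neg_add_eq_sub, ← neg_sub p 1, div_neg, neg_div,
    neg_neg]

theorem antitoneOn_rpow_neg_Ici {p c : ℝ} (hp : 0 ≤ p) (hc : 0 < c) :
    AntitoneOn (fun t : ℝ => t ^ (-p)) (Ici c) :=
  (antitoneOn_rpow_Ioi_of_exponent_nonpos (neg_nonpos.mpr hp)).mono (Ici_subset_Ioi.mpr hc)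

theorem le_tsum_rpow_neg_nat_add {p : ℝ} (hp : 1 < p) {N : ℕ} (hN : 0 < N) :
    (N : ℝ) ^ (1 - p) / (p - 1) ≤ ∑' i : ℕ, ((i + N : ℕ) : ℝ) ^ (-p) := by
  have hNpos : (0 : ℝ) < N := Nat.cast_pos.mpr hN
  rw [← integral_Ioi_rpow_neg hp hNpos]
  exact (antitoneOn_rpow_neg_Ici (by linarith) hNpos).integral_le_tsum_comp_add N
    (Real.summable_nat_rpow.mpr (by linarith))
    fun t ht => rpow_nonneg (hNpos.trans ht).le _

theorem tsum_rpow_neg_nat_add_le {p : ℝ} (hp : 1 < p) {N : ℕ} (hN : 0 < N) :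
    ∑' i : ℕ, ((i + N : ℕ) : ℝ) ^ (-p) ≤ (N : ℝ) ^ (-p) + (N : ℝ) ^ (1 - p) / (p - 1) := by
  have hNpos : (0 : ℝ) < N := Nat.cast_pos.mpr hN
  rw [((summable_nat_add_iff N).mpr (Real.summable_nat_rpow.mpr (by linarith))).tsum_eq_zero_add,
    ← integral_Ioi_rpow_neg hp hNpos, zero_add]
  gcongr
  simpa only [Nat.add_right_comm] using
    (antitoneOn_rpow_neg_Ici (by linarith) hNpos).tsum_comp_add_le_integral N
      (integrableOn_Ioi_rpow_of_lt (by linarith) hNpos)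
      fun t ht => rpow_nonneg (hNpos.trans ht).le _

theorem tsum_subtype_le_eq_tsum_nat_add {α : Type*} [AddCommMonoid α] [TopologicalSpace α]
    (f : ℕ → α) (N : ℕ) : ∑' k : {k : ℕ // N ≤ k}, f k = ∑' i : ℕ, f (i + N) := by
  let e : ℕ ≃ {k : ℕ // N ≤ k} :=
    { toFun i := ⟨i + N, Nat.le_add_left N i⟩
      invFun k := k - N
      left_inv i := by simp
      right_inv k := Subtype.ext (Nat.sub_add_cancel k.2) }
  exact (e.tsum_eq fun k => f k).symm

theorem tsum_rpow_neg_subtype_ceil_le_mem_Icc {p x : ℝ} (hp : 1 < p) (hx : 0 < x) :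
    ∑' k : {k : ℕ // ⌈x⌉₊ ≤ k}, ((k : ℕ) : ℝ) ^ (-p) ∈
      Icc ((x + 1) ^ (1 - p) / (p - 1)) (x ^ (-p) + x ^ (1 - p) / (p - 1)) := by
  rw [tsum_subtype_le_eq_tsum_nat_add (fun k : ℕ => (k : ℝ) ^ (-p))]
  have hN : 0 < ⌈x⌉₊ := Nat.ceil_pos.mpr hx
  have hxN : x ≤ ⌈x⌉₊ := Nat.le_ceil x
  have hNx : (⌈x⌉₊ : ℝ) ≤ x + 1 := (Nat.ceil_lt_add_one hx.le).le
  have hp1 : 0 < p - 1 := by linarith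
  constructor
  · calc (x + 1) ^ (1 - p) / (p - 1) ≤ (⌈x⌉₊ : ℝ) ^ (1 - p) / (p - 1) :=
          div_le_div_of_nonneg_right
            (rpow_le_rpow_of_nonpos (hx.trans_le hxN) hNx (by linarith)) hp1.le
      _ ≤ _ := le_tsum_rpow_neg_nat_add hp hN
  · refine (tsum_rpow_neg_nat_add_le hp hN).trans (add_le_add ?_ ?_)
    · exact rpow_le_rpow_of_nonpos hx hxN (by linarith)
    · exact div_le_div_of_nonneg_right (rpow_le_rpow_of_nonpos hx hxN (by linarith)) hp1.le

theorem tendsto_rpow_mul_tsum_rpow_neg_ceil_le {p : ℝ} (hp : 1 < p) :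
    Tendsto (fun x : ℝ => x ^ (p - 1) * ∑' k : {k : ℕ // ⌈x⌉₊ ≤ k}, ((k : ℕ) : ℝ) ^ (-p))
      atTop (𝓝 (1 / (p - 1))) := by
  have hlower : Tendsto (fun x : ℝ => (1 + x⁻¹) ^ (1 - p) / (p - 1)) atTop (𝓝 (1 / (p - 1))) := by
    simpa using ((tendsto_inv_atTop_zero.const_add 1).rpow_const (p := 1 - p)
      (Or.inl (by norm_num))).div_const (p - 1)
  have hupper : Tendsto (fun x : ℝ => x⁻¹ + 1 / (p - 1)) atTop (𝓝 (1 / (p - 1))) := by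
    simpa using tendsto_inv_atTop_zero.add_const (1 / (p - 1))
  refine tendsto_of_tendsto_of_tendsto_of_le_of_le' hlower hupper ?_ ?_ <;>
    filter_upwards [eventually_gt_atTop 0] with x hx
  · calc (1 + x⁻¹) ^ (1 - p) / (p - 1) = x ^ (p - 1) * ((x + 1) ^ (1 - p) / (p - 1)) := by
          rw [show 1 + x⁻¹ = (x + 1) * x⁻¹ by field_simp, mul_rpow (by positivity) (by positivity),
            inv_rpow hx.le, ← rpow_neg hx.le, neg_sub]
          ring
      _ ≤ _ := by gcongr; exact (tsum_rpow_neg_subtype_ceil_le_mem_Icc hp hx).1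
  · calc _ ≤ x ^ (p - 1) * (x ^ (-p) + x ^ (1 - p) / (p - 1)) := by
          gcongr; exact (tsum_rpow_neg_subtype_ceil_le_mem_Icc hp hx).2
      _ = x ^ (p - 1 + -p) + x ^ (p - 1 + (1 - p)) / (p - 1) := by
          rw [rpow_add hx, rpow_add hx]; ring
      _ = x⁻¹ + 1 / (p - 1) := by
          rw [show p - 1 + -p = -1 by ring, show p - 1 + (1 - p) = 0 by ring, rpow_neg_one,
            rpow_zero]

theorem tail_sum_asymptotics (s δ : ℝ) (hs : 0 < s) (hδ : 1 / 2 < δ) :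
    Tendsto (fun n : ℕ =>
        ((n : ℝ) + 1) *
          ∑' k : {k : ℕ // ⌈(((n : ℝ) + 1) * s) ^ (1 / (2 * δ - 1))⌉₊ ≤ k},
            ((k : ℕ) : ℝ) ^ (-(2 * δ)))
      atTop (nhds (1 / ((2 * δ - 1) * s))) := by
  have hp : 1 < 2 * δ := by linarith
  have hbase : Tendsto (fun n : ℕ => ((n : ℝ) + 1) * s) atTop atTop :=
    (tendsto_atTop_add_const_right _ 1 tendsto_natCast_atTop_atTop).atTop_mul_const hs
  have hx := (tendsto_rpow_atTop (one_div_pos.mpr (sub_pos.mpr hp))).comp hbase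
  convert ((tendsto_rpow_mul_tsum_rpow_neg_ceil_le hp).comp hx).const_mul s⁻¹ using 2 with n
  · rw [Function.comp_apply, Function.comp_apply, one_div,
      rpow_inv_rpow (by positivity) (by linarith : 2 * δ - 1 ≠ 0)]
    field_simp
  · rw [one_div, one_div, mul_inv, mul_comm]
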